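/- There is a HyperLTL sentence φ_op over AP = {arg_l, arg_r, res, add, mult} whose unique model is T_op. -/
import Mathlib


/-! ### HyperLTL: syntax and semantics -/

/-- A trace over a set `AP` of atomic propositions. -/
abbrev Trace (AP : Type) : Type := ℕ → Set AP

/-- The suffix of a trace from position `j` onwards. -/
def Trace.shift {AP : Type} (t : Trace AP) (j : ℕ) : Trace AP := fun i => t (i + j)

/-- Quantifier-free HyperLTL formulas; trace variables are natural numbers. -/
inductive QF (AP : Type) : Type where
  | atom : AP → ℕ → QF AP
  | neg  : QF AP → QF AP
  | disj : QF AP → QF AP → QF AP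
  | next : QF AP → QF AP
  | untl : QF AP → QF AP → QF AP

/-- HyperLTL formulas: a block of trace quantifiers followed by a
quantifier-free formula (HyperLTL formulas are in prenex normal form). -/
inductive HFormula (AP : Type) : Type where
  | ex  : ℕ → HFormula AP → HFormula AP
  | all : ℕ → HFormula AP → HFormula AP
  | qf  : QF AP → HFormula AP

/-- The simultaneous shift of a trace assignment. -/
def shiftAsg {AP : Type} (As : ℕ → Trace AP) (j : ℕ) : ℕ → Trace AP :=
  fun x => Trace.shift (As x) j

/-- Semantics of quantifier-free HyperLTL formulas w.r.t. a trace assignment. -/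
def QF.sat {AP : Type} : QF AP → (ℕ → Trace AP) → Prop
  | .atom a x, As => a ∈ As x 0
  | .neg ψ, As => ¬ ψ.sat As
  | .disj ψ₁ ψ₂, As => ψ₁.sat As ∨ ψ₂.sat As
  | .next ψ, As => ψ.sat (shiftAsg As 1)
  | .untl ψ₁ ψ₂, As => ∃ j, ψ₂.sat (shiftAsg As j) ∧ ∀ j' < j, ψ₁.sat (shiftAsg As j')

/-- Semantics of HyperLTL formulas w.r.t. a set of traces and a trace assignment. -/
def HFormula.sat {AP : Type} : HFormula AP → Set (Trace AP) → (ℕ → Trace AP) → Prop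
  | .ex x φ, T, As => ∃ t ∈ T, φ.sat T (Function.update As x t)
  | .all x φ, T, As => ∀ t ∈ T, φ.sat T (Function.update As x t)
  | .qf ψ, _, As => ψ.sat As

def QF.freeVars {AP : Type} : QF AP → Set ℕ
  | .atom _ x => {x}
  | .neg ψ => ψ.freeVars
  | .disj ψ₁ ψ₂ => ψ₁.freeVars ∪ ψ₂.freeVars
  | .next ψ => ψ.freeVars
  | .untl ψ₁ ψ₂ => ψ₁.freeVars ∪ ψ₂.freeVars

def HFormula.freeVars {AP : Type} : HFormula AP → Set ℕ
  | .ex x φ => φ.freeVars \ {x}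
  | .all x φ => φ.freeVars \ {x}
  | .qf ψ => ψ.freeVars

/-- A sentence is a formula without free variables. -/
def HFormula.IsSentence {AP : Type} (φ : HFormula AP) : Prop := φ.freeVars = ∅

/-- `T` is a model of `φ` (for sentences the initial assignment is irrelevant). -/
def HModels {AP : Type} (T : Set (Trace AP)) (φ : HFormula AP) : Prop :=
  φ.sat T (fun _ _ => ∅)

/-- A HyperLTL sentence is satisfiable if it has a model. -/
def HSatisfiable {AP : Type} (φ : HFormula AP) : Prop := ∃ T, HModels T φ

/-- The atomic propositions `arg_l`, `arg_r`, `res`, `add`, `mult`. -/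
inductive AP5 : Type where
  | argl | argr | res | add | mult
deriving DecidableEq

/-- The set `T_op` of traces encoding correct additions and multiplications. -/
def TOp : Set (Trace AP5) :=
  {t | ∃ n₁ n₂ n₃ : ℕ,
    (∀ n, AP5.argl ∈ t n ↔ n = n₁) ∧
    (∀ n, AP5.argr ∈ t n ↔ n = n₂) ∧
    (∀ n, AP5.res ∈ t n ↔ n = n₃) ∧
    (((∀ n, AP5.add ∈ t n ∧ AP5.mult ∉ t n) ∧ n₁ + n₂ = n₃) ∨
     ((∀ n, AP5.mult ∈ t n ∧ AP5.add ∉ t n) ∧ n₁ * n₂ = n₃))}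
namespace Hyp
open AP5

/-! ### Derived QF connectives -/

def cj {A : Type} (a b : QF A) : QF A := .neg (.disj (.neg a) (.neg b))
def im {A : Type} (a b : QF A) : QF A := .disj (.neg a) b
def ev {A : Type} (ψ : QF A) : QF A := .untl (.disj ψ (.neg ψ)) ψ
def gl {A : Type} (ψ : QF A) : QF A := .neg (ev (.neg ψ))

@[simp] lemma shiftAsg_shiftAsg {A : Type} (As : ℕ → Trace A) (j k : ℕ) :
    shiftAsg (shiftAsg As j) k = shiftAsg As (k + j) := by
  funext x i; simp [shiftAsg, Trace.shift, Nat.add_assoc]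

lemma atom_sat {A : Type} (a : A) (x : ℕ) (As : ℕ → Trace A) :
    (QF.atom a x).sat As ↔ a ∈ As x 0 := Iff.rfl

lemma atom_shift {A : Type} (a : A) (x : ℕ) (As : ℕ → Trace A) (j : ℕ) :
    (QF.atom a x).sat (shiftAsg As j) ↔ a ∈ As x j := by
  simp [QF.sat, shiftAsg, Trace.shift]

lemma next_sat {A : Type} (ψ : QF A) (As : ℕ → Trace A) :
    (QF.next ψ).sat As ↔ ψ.sat (shiftAsg As 1) := Iff.rfl

lemma disj_sat {A : Type} (a b : QF A) (As : ℕ → Trace A) :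
    (QF.disj a b).sat As ↔ a.sat As ∨ b.sat As := Iff.rfl

lemma cj_sat {A : Type} (a b : QF A) (As : ℕ → Trace A) :
    (cj a b).sat As ↔ a.sat As ∧ b.sat As := by
  simp [cj, QF.sat]

lemma im_sat {A : Type} (a b : QF A) (As : ℕ → Trace A) :
    (im a b).sat As ↔ (a.sat As → b.sat As) := by
  simp [im, QF.sat]; tauto

lemma ev_sat {A : Type} (ψ : QF A) (As : ℕ → Trace A) :
    (ev ψ).sat As ↔ ∃ j, ψ.sat (shiftAsg As j) := by
  constructor
  · rintro ⟨j, h, -⟩; exact ⟨j, h⟩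
  · rintro ⟨j, h⟩; exact ⟨j, h, fun _ _ => Classical.em _⟩

lemma gl_sat {A : Type} (ψ : QF A) (As : ℕ → Trace A) :
    (gl ψ).sat As ↔ ∀ j, ψ.sat (shiftAsg As j) := by
  rw [gl, show ∀ (χ : QF A) (Bs), (QF.neg χ).sat Bs ↔ ¬ χ.sat Bs from fun _ _ => Iff.rfl,
    ev_sat]
  push_neg
  constructor
  · intro h j
    have := h j
    rw [show ∀ (χ : QF A) (Bs), (QF.neg χ).sat Bs ↔ ¬ χ.sat Bs from fun _ _ => Iff.rfl] at this
    exact not_not.mp this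
  · intro h j
    rw [show ∀ (χ : QF A) (Bs), (QF.neg χ).sat Bs ↔ ¬ χ.sat Bs from fun _ _ => Iff.rfl]
    exact not_not.mpr (h j)

attribute [irreducible] cj im ev gl

/-! ### Semantic predicates on traces -/

def Uq (t : Trace AP5) (a : AP5) (n : ℕ) : Prop := ∀ m, a ∈ t m ↔ m = n
def AddT (t : Trace AP5) : Prop := ∀ n, AP5.add ∈ t n ∧ AP5.mult ∉ t n
def MultT (t : Trace AP5) : Prop := ∀ n, AP5.mult ∈ t n ∧ AP5.add ∉ t n
def SameP (t t' : Trace AP5) (a b : AP5) : Prop := ∃ j, a ∈ t j ∧ b ∈ t' j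
def SuccP (t t' : Trace AP5) (a b : AP5) : Prop := ∃ j, a ∈ t j ∧ b ∈ t' (j + 1)
def GoodT (t : Trace AP5) : Prop :=
  (∃ n, Uq t .argl n) ∧ (∃ n, Uq t .argr n) ∧ (∃ n, Uq t .res n) ∧ (AddT t ∨ MultT t)

/-! ### Positional QF formulas and their semantics -/

def samep (a : AP5) (x : ℕ) (b : AP5) (y : ℕ) : QF AP5 := ev (cj (.atom a x) (.atom b y))
def succp (a : AP5) (x : ℕ) (b : AP5) (y : ℕ) : QF AP5 :=
  ev (cj (.atom a x) (.next (.atom b y)))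
def exod (a : AP5) (x : ℕ) : QF AP5 :=
  cj (ev (.atom a x)) (.neg (ev (cj (.atom a x) (.next (ev (.atom a x))))))
def glA (x : ℕ) : QF AP5 := cj (gl (.atom .add x)) (gl (.neg (.atom .mult x)))
def glM (x : ℕ) : QF AP5 := cj (gl (.atom .mult x)) (gl (.neg (.atom .add x)))

lemma samep_sat (a : AP5) (x : ℕ) (b : AP5) (y : ℕ) (As : ℕ → Trace AP5) :
    (samep a x b y).sat As ↔ SameP (As x) (As y) a b := by
  simp only [samep, ev_sat, cj_sat, atom_shift, SameP]

lemma succp_sat (a : AP5) (x : ℕ) (b : AP5) (y : ℕ) (As : ℕ → Trace AP5) :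
    (succp a x b y).sat As ↔ SuccP (As x) (As y) a b := by
  simp only [succp, ev_sat, cj_sat, next_sat, shiftAsg_shiftAsg, atom_shift, SuccP]
  constructor
  · rintro ⟨j, h1, h2⟩
    exact ⟨j, h1, by rwa [Nat.add_comm] at h2⟩
  · rintro ⟨j, h1, h2⟩
    exact ⟨j, h1, by rwa [Nat.add_comm]⟩

lemma exod_sat (a : AP5) (x : ℕ) (As : ℕ → Trace AP5) :
    (exod a x).sat As ↔ ∃ n, Uq (As x) a n := by
  have hneg : ∀ (χ : QF AP5) (Bs), (QF.neg χ).sat Bs ↔ ¬ χ.sat Bs := fun _ _ => Iff.rfl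
  simp only [exod, cj_sat, hneg, ev_sat, next_sat, shiftAsg_shiftAsg, atom_shift,
    not_exists, not_and]
  constructor
  · rintro ⟨⟨j, hj⟩, hno⟩
    refine ⟨j, fun m => ⟨fun hm => ?_, fun e => e ▸ hj⟩⟩
    by_contra hne
    rcases Nat.lt_or_ge m j with h | h
    · have h2 := hno m hm (j - m - 1)
      rw [show j - m - 1 + (1 + m) = j by omega] at h2
      exact h2 hj
    · have hmj : j < m := by omega
      have h2 := hno j hj (m - j - 1)
      rw [show m - j - 1 + (1 + j) = m by omega] at h2
      exact h2 hm
  · rintro ⟨n, hn⟩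
    refine ⟨⟨n, (hn n).2 rfl⟩, fun j hj k hk => ?_⟩
    have e1 := (hn j).1 hj
    have e2 := (hn _).1 hk
    omega

lemma glA_sat (x : ℕ) (As : ℕ → Trace AP5) : (glA x).sat As ↔ AddT (As x) := by
  have hneg : ∀ (χ : QF AP5) (Bs), (QF.neg χ).sat Bs ↔ ¬ χ.sat Bs := fun _ _ => Iff.rfl
  simp only [glA, cj_sat, gl_sat, hneg, atom_shift, AddT]
  constructor
  · rintro ⟨h1, h2⟩ n; exact ⟨h1 n, h2 n⟩
  · intro h; exact ⟨fun n => (h n).1, fun n => (h n).2⟩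

lemma glM_sat (x : ℕ) (As : ℕ → Trace AP5) : (glM x).sat As ↔ MultT (As x) := by
  have hneg : ∀ (χ : QF AP5) (Bs), (QF.neg χ).sat Bs ↔ ¬ χ.sat Bs := fun _ _ => Iff.rfl
  simp only [glM, cj_sat, gl_sat, hneg, atom_shift, MultT]
  constructor
  · rintro ⟨h1, h2⟩ n; exact ⟨h1 n, h2 n⟩
  · intro h; exact ⟨fun n => (h n).1, fun n => (h n).2⟩

attribute [irreducible] samep succp exod glA glM

end Hyp
namespace Hyp
open AP5

/-! ### The formula -/

def shapeQ (x : ℕ) : QF AP5 :=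
  cj (exod .argl x) (cj (exod .argr x) (cj (exod .res x) (.disj (glA x) (glM x))))

def c1 : QF AP5 := shapeQ 1
def c2 : QF AP5 := cj (glA 0) (cj (.atom .argl 0) (cj (.atom .argr 0) (.atom .res 0)))
def c3 : QF AP5 := im (glA 1) (.disj (cj (.atom .argl 1) (samep .argr 1 .res 1))
  (cj (glA 3) (cj (succp .argl 3 .argl 1) (cj (samep .argr 3 .argr 1) (succp .res 3 .res 1)))))
def c4 : QF AP5 := im (glM 1) (.disj (cj (.atom .argl 1) (.atom .res 1))
  (cj (glM 4) (cj (succp .argl 4 .argl 1) (cj (samep .argr 4 .argr 1)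
  (cj (glA 5) (cj (samep .argl 5 .res 4) (cj (samep .argr 5 .argr 1) (samep .res 5 .res 1))))))))
def c5 : QF AP5 := im (glA 1) (cj (glA 6) (cj (samep .argl 6 .argl 1)
  (cj (succp .argr 1 .argr 6) (succp .res 1 .res 6))))
def c6 : QF AP5 := im (glA 1) (cj (glA 7) (cj (succp .argl 1 .argl 7)
  (cj (samep .argr 7 .argr 1) (succp .res 1 .res 7))))
def c7 : QF AP5 := cj (glM 8) (cj (.atom .argl 8) (cj (.atom .res 8) (samep .argr 8 .argr 1)))
def c8 : QF AP5 := im (cj (glM 1) (cj (glA 2) (cj (samep .argl 2 .res 1) (samep .argr 2 .argr 1))))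
  (cj (glM 9) (cj (succp .argl 1 .argl 9) (cj (samep .argr 9 .argr 1) (samep .res 9 .res 2))))

def psiOp : QF AP5 := cj c1 (cj c2 (cj c3 (cj c4 (cj c5 (cj c6 (cj c7 c8))))))

def phiOp : HFormula AP5 :=
  .ex 0 (.all 1 (.all 2 (.ex 3 (.ex 4 (.ex 5 (.ex 6 (.ex 7 (.ex 8 (.ex 9 (.qf psiOp))))))))))

/-! ### The semantic content of `psiOp` -/

def Cond (t0 t1 t2 t3 t4 t5 t6 t7 t8 t9 : Trace AP5) : Prop :=
  GoodT t1 ∧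
  (AddT t0 ∧ (AP5.argl ∈ t0 0 ∧ AP5.argr ∈ t0 0 ∧ AP5.res ∈ t0 0)) ∧
  (AddT t1 → ((AP5.argl ∈ t1 0 ∧ SameP t1 t1 .argr .res) ∨
    (AddT t3 ∧ SuccP t3 t1 .argl .argl ∧ SameP t3 t1 .argr .argr ∧ SuccP t3 t1 .res .res))) ∧
  (MultT t1 → ((AP5.argl ∈ t1 0 ∧ AP5.res ∈ t1 0) ∨
    (MultT t4 ∧ SuccP t4 t1 .argl .argl ∧ SameP t4 t1 .argr .argr ∧ AddT t5 ∧
      SameP t5 t4 .argl .res ∧ SameP t5 t1 .argr .argr ∧ SameP t5 t1 .res .res))) ∧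
  (AddT t1 → (AddT t6 ∧ SameP t6 t1 .argl .argl ∧ SuccP t1 t6 .argr .argr ∧
    SuccP t1 t6 .res .res)) ∧
  (AddT t1 → (AddT t7 ∧ SuccP t1 t7 .argl .argl ∧ SameP t7 t1 .argr .argr ∧
    SuccP t1 t7 .res .res)) ∧
  (MultT t8 ∧ AP5.argl ∈ t8 0 ∧ AP5.res ∈ t8 0 ∧ SameP t8 t1 .argr .argr) ∧
  ((MultT t1 ∧ AddT t2 ∧ SameP t2 t1 .argl .res ∧ SameP t2 t1 .argr .argr) →
    (MultT t9 ∧ SuccP t1 t9 .argl .argl ∧ SameP t9 t1 .argr .argr ∧ SameP t9 t2 .res .res))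

lemma psi_sat (As : ℕ → Trace AP5) :
    psiOp.sat As ↔ Cond (As 0) (As 1) (As 2) (As 3) (As 4) (As 5) (As 6) (As 7) (As 8) (As 9) := by
  simp only [psiOp, c1, c2, c3, c4, c5, c6, c7, c8, shapeQ, cj_sat, im_sat, disj_sat, atom_sat,
    samep_sat, succp_sat, exod_sat, glA_sat, glM_sat, Cond, GoodT]

lemma models_iff (T : Set (Trace AP5)) :
    HModels T phiOp ↔ ∃ t0 ∈ T, ∀ t1 ∈ T, ∀ t2 ∈ T, ∃ t3 ∈ T, ∃ t4 ∈ T, ∃ t5 ∈ T,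
      ∃ t6 ∈ T, ∃ t7 ∈ T, ∃ t8 ∈ T, ∃ t9 ∈ T, Cond t0 t1 t2 t3 t4 t5 t6 t7 t8 t9 := by
  simp only [HModels, phiOp, HFormula.sat, psi_sat, Function.update]
  norm_num

lemma phiOp_sentence : phiOp.IsSentence := by
  show phiOp.freeVars = ∅
  have hsp : ∀ x, (samep .argr x .res x).freeVars = {x} := by
    intro x; simp [samep, ev, cj, QF.freeVars]
  ext n
  simp only [phiOp, HFormula.freeVars, psiOp, c1, c2, c3, c4, c5, c6, c7, c8, shapeQ,
    cj, im, ev, gl, samep, succp, exod, glA, glM, QF.freeVars,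
    Set.mem_diff, Set.mem_union, Set.mem_singleton_iff, Set.mem_empty_iff_false, iff_false,
    not_and, not_or, not_not]
  omega

end Hyp
namespace Hyp
open AP5

/-! ### Canonical traces -/

def addTr (p q : ℕ) : Trace AP5 := fun n =>
  {a | (a = AP5.argl ∧ n = p) ∨ (a = AP5.argr ∧ n = q) ∨ (a = AP5.res ∧ n = p + q) ∨ a = AP5.add}

def mulTr (p q : ℕ) : Trace AP5 := fun n =>
  {a | (a = AP5.argl ∧ n = p) ∨ (a = AP5.argr ∧ n = q) ∨ (a = AP5.res ∧ n = p * q) ∨ a = AP5.mult}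

@[simp] lemma mem_addTr (a : AP5) (n p q : ℕ) :
    a ∈ addTr p q n ↔ ((a = AP5.argl ∧ n = p) ∨ (a = AP5.argr ∧ n = q) ∨
      (a = AP5.res ∧ n = p + q) ∨ a = AP5.add) := Iff.rfl

@[simp] lemma mem_mulTr (a : AP5) (n p q : ℕ) :
    a ∈ mulTr p q n ↔ ((a = AP5.argl ∧ n = p) ∨ (a = AP5.argr ∧ n = q) ∨
      (a = AP5.res ∧ n = p * q) ∨ a = AP5.mult) := Iff.rfl

lemma Uq_addTr_argl (p q : ℕ) : Uq (addTr p q) .argl p := fun m => by simp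
lemma Uq_addTr_argr (p q : ℕ) : Uq (addTr p q) .argr q := fun m => by simp
lemma Uq_addTr_res (p q : ℕ) : Uq (addTr p q) .res (p + q) := fun m => by simp
lemma AddT_addTr (p q : ℕ) : AddT (addTr p q) := fun n => by simp
lemma not_MultT_addTr (p q : ℕ) : ¬ MultT (addTr p q) := fun h => (h 0).2 (by simp)

lemma Uq_mulTr_argl (p q : ℕ) : Uq (mulTr p q) .argl p := fun m => by simp
lemma Uq_mulTr_argr (p q : ℕ) : Uq (mulTr p q) .argr q := fun m => by simp
lemma Uq_mulTr_res (p q : ℕ) : Uq (mulTr p q) .res (p * q) := fun m => by simp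
lemma MultT_mulTr (p q : ℕ) : MultT (mulTr p q) := fun n => by simp
lemma not_AddT_mulTr (p q : ℕ) : ¬ AddT (mulTr p q) := fun h => (h 0).2 (by simp)

lemma GoodT_addTr (p q : ℕ) : GoodT (addTr p q) :=
  ⟨⟨p, Uq_addTr_argl p q⟩, ⟨q, Uq_addTr_argr p q⟩, ⟨p + q, Uq_addTr_res p q⟩,
    Or.inl (AddT_addTr p q)⟩

lemma GoodT_mulTr (p q : ℕ) : GoodT (mulTr p q) :=
  ⟨⟨p, Uq_mulTr_argl p q⟩, ⟨q, Uq_mulTr_argr p q⟩, ⟨p * q, Uq_mulTr_res p q⟩,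
    Or.inr (MultT_mulTr p q)⟩

lemma eq_addTr {t : Trace AP5} {p q : ℕ} (h1 : Uq t .argl p) (h2 : Uq t .argr q)
    (h3 : Uq t .res (p + q)) (h4 : AddT t) : t = addTr p q := by
  funext n
  ext a
  cases a
  · simp [h1 n]
  · simp [h2 n]
  · simp [h3 n]
  · simp [(h4 n).1]
  · simp [(h4 n).2]

lemma eq_mulTr {t : Trace AP5} {p q : ℕ} (h1 : Uq t .argl p) (h2 : Uq t .argr q)
    (h3 : Uq t .res (p * q)) (h4 : MultT t) : t = mulTr p q := by
  funext n
  ext a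
  cases a
  · simp [h1 n]
  · simp [h2 n]
  · simp [h3 n]
  · simp [(h4 n).2]
  · simp [(h4 n).1]

lemma addTr_mem (p q : ℕ) : addTr p q ∈ TOp :=
  ⟨p, q, p + q, Uq_addTr_argl p q, Uq_addTr_argr p q, Uq_addTr_res p q,
    Or.inl ⟨AddT_addTr p q, rfl⟩⟩

lemma mulTr_mem (p q : ℕ) : mulTr p q ∈ TOp :=
  ⟨p, q, p * q, Uq_mulTr_argl p q, Uq_mulTr_argr p q, Uq_mulTr_res p q,
    Or.inr ⟨MultT_mulTr p q, rfl⟩⟩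

lemma mem_TOp_iff (t : Trace AP5) :
    t ∈ TOp ↔ (∃ p q, t = addTr p q) ∨ (∃ p q, t = mulTr p q) := by
  constructor
  · rintro ⟨p, q, r, h1, h2, h3, ⟨h4, h5⟩ | ⟨h4, h5⟩⟩
    · subst h5
      exact Or.inl ⟨p, q, eq_addTr h1 h2 h3 h4⟩
    · subst h5
      exact Or.inr ⟨p, q, eq_mulTr h1 h2 h3 h4⟩
  · rintro (⟨p, q, rfl⟩ | ⟨p, q, rfl⟩)
    · exact addTr_mem p q
    · exact mulTr_mem p q

end Hyp
namespace Hyp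
open AP5

lemma main_fwd (T : Set (Trace AP5))
    (h : ∃ t0 ∈ T, ∀ t1 ∈ T, ∀ t2 ∈ T, ∃ t3 ∈ T, ∃ t4 ∈ T, ∃ t5 ∈ T,
      ∃ t6 ∈ T, ∃ t7 ∈ T, ∃ t8 ∈ T, ∃ t9 ∈ T, Cond t0 t1 t2 t3 t4 t5 t6 t7 t8 t9) :
    T = TOp := by
  obtain ⟨t0, ht0, H⟩ := h
  -- every trace in the model has the right shape
  have good : ∀ t ∈ T, GoodT t := by
    intro t ht
    obtain ⟨t3, ht3, t4, ht4, t5, ht5, t6, ht6, t7, ht7, t8, ht8, t9, ht9, hc⟩ :=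
      H t ht t0 ht0
    exact hc.1
  -- the base trace is the addition trace 0 + 0 = 0
  have base : t0 = addTr 0 0 := by
    obtain ⟨t3, ht3, t4, ht4, t5, ht5, t6, ht6, t7, ht7, t8, ht8, t9, ht9, hc⟩ :=
      H t0 ht0 t0 ht0
    obtain ⟨ha0, hl, hr, hs⟩ := hc.2.1
    obtain ⟨⟨p, hp⟩, ⟨q, hq⟩, ⟨r, hr'⟩, -⟩ := good t0 ht0
    have ep : p = 0 := ((hp 0).1 hl).symm
    have eq' : q = 0 := ((hq 0).1 hr).symm
    have er : r = 0 := ((hr' 0).1 hs).symm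
    subst ep; subst eq'; subst er
    exact eq_addTr hp hq hr' ha0
  -- soundness of addition traces
  have addS : ∀ p, ∀ t ∈ T, AddT t → ∀ q r, Uq t .argl p → Uq t .argr q → Uq t .res r →
      r = p + q := by
    intro p
    induction p using Nat.strong_induction_on with
    | _ p IH =>
      intro t ht ha q r h1 h2 h3
      obtain ⟨t3, ht3, t4, ht4, t5, ht5, t6, ht6, t7, ht7, t8, ht8, t9, ht9, hc⟩ :=
        H t ht t0 ht0
      rcases hc.2.2.1 ha with ⟨h0, j, hjr, hjs⟩ |
        ⟨ha3, ⟨i, hi1, hi2⟩, ⟨j, hj1, hj2⟩, ⟨k, hk1, hk2⟩⟩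
      · have ep : p = 0 := ((h1 0).1 h0).symm
        have e1 : j = q := (h2 j).1 hjr
        have e2 : j = r := (h3 j).1 hjs
        omega
      · obtain ⟨⟨p', hp'⟩, ⟨q', hq'⟩, ⟨r', hr'⟩, -⟩ := good t3 ht3
        have e1 : i = p' := (hp' i).1 hi1
        have e2 : i + 1 = p := (h1 _).1 hi2
        have e3 : j = q' := (hq' j).1 hj1
        have e4 : j = q := (h2 j).1 hj2
        have e5 : k = r' := (hr' k).1 hk1
        have e6 : k + 1 = r := (h3 _).1 hk2
        have := IH p' (by omega) t3 ht3 ha3 q' r' hp' hq' hr'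
        omega
  -- soundness of multiplication traces
  have mulS : ∀ p, ∀ t ∈ T, MultT t → ∀ q r, Uq t .argl p → Uq t .argr q → Uq t .res r →
      r = p * q := by
    intro p
    induction p using Nat.strong_induction_on with
    | _ p IH =>
      intro t ht hm q r h1 h2 h3
      obtain ⟨t3, ht3, t4, ht4, t5, ht5, t6, ht6, t7, ht7, t8, ht8, t9, ht9, hc⟩ :=
        H t ht t0 ht0
      rcases hc.2.2.2.1 hm with ⟨h0l, h0r⟩ |
        ⟨hm4, ⟨i, hi1, hi2⟩, ⟨j, hj1, hj2⟩, ha5, ⟨k, hk1, hk2⟩, ⟨l, hl1, hl2⟩, ⟨m, hm1, hm2⟩⟩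
      · have ep : p = 0 := ((h1 0).1 h0l).symm
        have er : r = 0 := ((h3 0).1 h0r).symm
        subst ep; subst er; simp
      · obtain ⟨⟨p4, hp4⟩, ⟨q4, hq4⟩, ⟨r4, hr4⟩, hmode4⟩ := good t4 ht4
        obtain ⟨⟨p5, hp5⟩, ⟨q5, hq5⟩, ⟨r5, hr5⟩, -⟩ := good t5 ht5
        have e1 : i = p4 := (hp4 i).1 hi1
        have e2 : i + 1 = p := (h1 _).1 hi2
        have e3 : j = q4 := (hq4 j).1 hj1
        have e4 : j = q := (h2 j).1 hj2
        -- t4 is a multiplication trace with argument p4 < p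
        have hr4v : r4 = p4 * q4 := IH p4 (by omega) t4 ht4 hm4 q4 r4 hp4 hq4 hr4
        -- t5 is an addition trace: r5 = p5 + q5
        have hr5v : r5 = p5 + q5 := addS p5 t5 ht5 ha5 q5 r5 hp5 hq5 hr5
        -- argl of t5 is at res of t4
        have e5 : k = p5 := (hp5 k).1 hk1
        have e6 : k = r4 := (hr4 k).1 hk2
        -- argr of t5 is at q
        have e7 : l = q5 := (hq5 l).1 hl1
        have e8 : l = q := (h2 l).1 hl2
        -- res of t5 is at r
        have e9 : m = r5 := (hr5 m).1 hm1
        have e10 : m = r := (h3 m).1 hm2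
        have eq4 : q4 = q := by omega
        rw [eq4] at hr4v
        have ep : p = p4 + 1 := by omega
        subst ep
        rw [Nat.succ_mul]
        omega
  have sub1 : T ⊆ TOp := by
    intro t ht
    obtain ⟨⟨p, h1⟩, ⟨q, h2⟩, ⟨r, h3⟩, hmode⟩ := good t ht
    rcases hmode with ha | hm
    · exact ⟨p, q, r, h1, h2, h3, Or.inl ⟨ha, (addS p t ht ha q r h1 h2 h3).symm⟩⟩
    · exact ⟨p, q, r, h1, h2, h3, Or.inr ⟨hm, (mulS p t ht hm q r h1 h2 h3).symm⟩⟩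
  -- completeness for addition
  have stepq : ∀ p q, addTr p q ∈ T → addTr p (q + 1) ∈ T := by
    intro p q hmem
    obtain ⟨t3, ht3, t4, ht4, t5, ht5, t6, ht6, t7, ht7, t8, ht8, t9, ht9, hc⟩ :=
      H (addTr p q) hmem t0 ht0
    obtain ⟨ha6, ⟨i, hi1, hi2⟩, ⟨j, hj1, hj2⟩, ⟨k, hk1, hk2⟩⟩ :=
      hc.2.2.2.2.1 (AddT_addTr p q)
    obtain ⟨⟨p6, hp6⟩, ⟨q6, hq6⟩, ⟨r6, hr6⟩, -⟩ := good t6 ht6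
    have e1 : i = p6 := (hp6 i).1 hi1
    have e2 : i = p := by simpa using hi2
    have e3 : j = q := by simpa using hj1
    have e4 : j + 1 = q6 := (hq6 _).1 hj2
    have e5 : k = p + q := by simpa using hk1
    have e6 : k + 1 = r6 := (hr6 _).1 hk2
    have h6 : t6 = addTr p (q + 1) := by
      have ep : p6 = p := by omega
      have eqq : q6 = q + 1 := by omega
      have err : r6 = p + (q + 1) := by omega
      rw [ep] at hp6; rw [eqq] at hq6; rw [err] at hr6
      exact eq_addTr hp6 hq6 hr6 ha6
    exact h6 ▸ ht6
  have stepp : ∀ p q, addTr p q ∈ T → addTr (p + 1) q ∈ T := by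
    intro p q hmem
    obtain ⟨t3, ht3, t4, ht4, t5, ht5, t6, ht6, t7, ht7, t8, ht8, t9, ht9, hc⟩ :=
      H (addTr p q) hmem t0 ht0
    obtain ⟨ha7, ⟨i, hi1, hi2⟩, ⟨j, hj1, hj2⟩, ⟨k, hk1, hk2⟩⟩ :=
      hc.2.2.2.2.2.1 (AddT_addTr p q)
    obtain ⟨⟨p7, hp7⟩, ⟨q7, hq7⟩, ⟨r7, hr7⟩, -⟩ := good t7 ht7
    have e1 : i = p := by simpa using hi1
    have e2 : i + 1 = p7 := (hp7 _).1 hi2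
    have e3 : j = q7 := (hq7 j).1 hj1
    have e4 : j = q := by simpa using hj2
    have e5 : k = p + q := by simpa using hk1
    have e6 : k + 1 = r7 := (hr7 _).1 hk2
    have h7 : t7 = addTr (p + 1) q := by
      have ep : p7 = p + 1 := by omega
      have eqq : q7 = q := by omega
      have err : r7 = (p + 1) + q := by omega
      rw [ep] at hp7; rw [eqq] at hq7; rw [err] at hr7
      exact eq_addTr hp7 hq7 hr7 ha7
    exact h7 ▸ ht7
  have addC : ∀ p q, addTr p q ∈ T := by
    intro p q
    induction p with
    | zero =>
      induction q with
      | zero => exact base ▸ ht0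
      | succ q ih => exact stepq 0 q ih
    | succ p ih => exact stepp p q ih
  -- completeness for multiplication
  have mulBase : ∀ q, mulTr 0 q ∈ T := by
    intro q
    obtain ⟨t3, ht3, t4, ht4, t5, ht5, t6, ht6, t7, ht7, t8, ht8, t9, ht9, hc⟩ :=
      H (addTr 0 q) (addC 0 q) t0 ht0
    obtain ⟨hm8, h8l, h8r, ⟨j, hj1, hj2⟩⟩ := hc.2.2.2.2.2.2.1
    obtain ⟨⟨p8, hp8⟩, ⟨q8, hq8⟩, ⟨r8, hr8⟩, -⟩ := good t8 ht8
    have e1 : p8 = 0 := ((hp8 0).1 h8l).symm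
    have e2 : r8 = 0 := ((hr8 0).1 h8r).symm
    have e3 : j = q8 := (hq8 j).1 hj1
    have e4 : j = q := by simpa using hj2
    have h8 : t8 = mulTr 0 q := by
      have ep : p8 = 0 := e1
      have eqq : q8 = q := by omega
      have err : r8 = 0 * q := by omega
      rw [ep] at hp8; rw [eqq] at hq8; rw [err] at hr8
      exact eq_mulTr hp8 hq8 hr8 hm8
    exact h8 ▸ ht8
  have mulStep : ∀ p q, mulTr p q ∈ T → mulTr (p + 1) q ∈ T := by
    intro p q hmem
    obtain ⟨t3, ht3, t4, ht4, t5, ht5, t6, ht6, t7, ht7, t8, ht8, t9, ht9, hc⟩ :=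
      H (mulTr p q) hmem (addTr (p * q) q) (addC (p * q) q)
    obtain ⟨hm9, ⟨i, hi1, hi2⟩, ⟨j, hj1, hj2⟩, ⟨k, hk1, hk2⟩⟩ :=
      hc.2.2.2.2.2.2.2 ⟨MultT_mulTr p q, AddT_addTr (p * q) q,
        ⟨p * q, by simp, by simp⟩, ⟨q, by simp, by simp⟩⟩
    obtain ⟨⟨p9, hp9⟩, ⟨q9, hq9⟩, ⟨r9, hr9⟩, -⟩ := good t9 ht9
    have e1 : i = p := by simpa using hi1
    have e2 : i + 1 = p9 := (hp9 _).1 hi2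
    have e3 : j = q9 := (hq9 j).1 hj1
    have e4 : j = q := by simpa using hj2
    have e5 : k = r9 := (hr9 k).1 hk1
    have e6 : k = p * q + q := by simpa using hk2
    have h9 : t9 = mulTr (p + 1) q := by
      have ep : p9 = p + 1 := by omega
      have eqq : q9 = q := by omega
      have err : r9 = (p + 1) * q := by rw [Nat.succ_mul]; omega
      rw [ep] at hp9; rw [eqq] at hq9; rw [err] at hr9
      exact eq_mulTr hp9 hq9 hr9 hm9
    exact h9 ▸ ht9
  have mulC : ∀ p q, mulTr p q ∈ T := by
    intro p q
    induction p with
    | zero => exact mulBase q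
    | succ p ih => exact mulStep p q ih
  have sub2 : TOp ⊆ T := by
    intro t ht
    rcases (mem_TOp_iff t).1 ht with ⟨p, q, rfl⟩ | ⟨p, q, rfl⟩
    · exact addC p q
    · exact mulC p q
  exact Set.Subset.antisymm sub1 sub2

end Hyp
namespace Hyp
open AP5

lemma w3 (a b : ℕ) : ∃ s ∈ TOp,
    ((AP5.argl ∈ addTr a b 0 ∧ SameP (addTr a b) (addTr a b) .argr .res) ∨
     (AddT s ∧ SuccP s (addTr a b) .argl .argl ∧ SameP s (addTr a b) .argr .argr ∧
      SuccP s (addTr a b) .res .res)) := by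
  rcases a with _ | a'
  · exact ⟨addTr 0 0, addTr_mem 0 0, Or.inl ⟨by simp, ⟨b, by simp, by simp⟩⟩⟩
  · refine ⟨addTr a' b, addTr_mem a' b, Or.inr ⟨AddT_addTr a' b,
      ⟨a', by simp, by simp⟩, ⟨b, by simp, by simp⟩, ⟨a' + b, by simp, by simp; omega⟩⟩⟩

lemma w4 (a b : ℕ) : ∃ s4 ∈ TOp, ∃ s5 ∈ TOp,
    ((AP5.argl ∈ mulTr a b 0 ∧ AP5.res ∈ mulTr a b 0) ∨
     (MultT s4 ∧ SuccP s4 (mulTr a b) .argl .argl ∧ SameP s4 (mulTr a b) .argr .argr ∧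
      AddT s5 ∧ SameP s5 s4 .argl .res ∧ SameP s5 (mulTr a b) .argr .argr ∧
      SameP s5 (mulTr a b) .res .res)) := by
  rcases a with _ | a'
  · exact ⟨mulTr 0 0, mulTr_mem 0 0, addTr 0 0, addTr_mem 0 0, Or.inl ⟨by simp, by simp⟩⟩
  · refine ⟨mulTr a' b, mulTr_mem a' b, addTr (a' * b) b, addTr_mem _ _, Or.inr
      ⟨MultT_mulTr a' b, ⟨a', by simp, by simp⟩, ⟨b, by simp, by simp⟩, AddT_addTr _ _,
       ⟨a' * b, by simp, by simp⟩, ⟨b, by simp, by simp⟩,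
       ⟨a' * b + b, by simp, by simp [Nat.succ_mul]⟩⟩⟩

lemma w8 (a b : ℕ) (t2 : Trace AP5) (ht2 : t2 ∈ TOp) : ∃ s ∈ TOp,
    ((MultT (mulTr a b) ∧ AddT t2 ∧ SameP t2 (mulTr a b) .argl .res ∧
      SameP t2 (mulTr a b) .argr .argr) →
     (MultT s ∧ SuccP (mulTr a b) s .argl .argl ∧ SameP s (mulTr a b) .argr .argr ∧
      SameP s t2 .res .res)) := by
  rcases (mem_TOp_iff t2).1 ht2 with ⟨c, d, rfl⟩ | ⟨c, d, rfl⟩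
  · by_cases hcd : c = a * b ∧ d = b
    · obtain ⟨rfl, rfl⟩ := hcd
      refine ⟨mulTr (a + 1) d, mulTr_mem _ _, fun _ => ⟨MultT_mulTr _ _,
        ⟨a, by simp, by simp⟩, ⟨d, by simp, by simp⟩,
        ⟨(a + 1) * d, by simp, by simp [Nat.succ_mul]⟩⟩⟩
    · refine ⟨addTr 0 0, addTr_mem 0 0, fun hg => absurd ?_ hcd⟩
      obtain ⟨-, -, ⟨j, hj1, hj2⟩, ⟨k, hk1, hk2⟩⟩ := hg
      constructor
      · have e1 : j = c := by simpa using hj1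
        have e2 : j = a * b := by simpa using hj2
        omega
      · have e3 : k = d := by simpa using hk1
        have e4 : k = b := by simpa using hk2
        omega
  · exact ⟨addTr 0 0, addTr_mem 0 0, fun hg => absurd hg.2.1 (not_AddT_mulTr c d)⟩

lemma main_bwd : ∃ t0 ∈ TOp, ∀ t1 ∈ TOp, ∀ t2 ∈ TOp, ∃ t3 ∈ TOp, ∃ t4 ∈ TOp, ∃ t5 ∈ TOp,
    ∃ t6 ∈ TOp, ∃ t7 ∈ TOp, ∃ t8 ∈ TOp, ∃ t9 ∈ TOp, Cond t0 t1 t2 t3 t4 t5 t6 t7 t8 t9 := by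
  refine ⟨addTr 0 0, addTr_mem 0 0, fun t1 ht1 t2 ht2 => ?_⟩
  rcases (mem_TOp_iff t1).1 ht1 with ⟨a, b, rfl⟩ | ⟨a, b, rfl⟩
  · obtain ⟨s3, hs3, h3⟩ := w3 a b
    refine ⟨s3, hs3, addTr 0 0, addTr_mem 0 0, addTr 0 0, addTr_mem 0 0,
      addTr a (b + 1), addTr_mem _ _, addTr (a + 1) b, addTr_mem _ _,
      mulTr 0 b, mulTr_mem _ _, addTr 0 0, addTr_mem 0 0, ?_⟩
    refine ⟨GoodT_addTr a b, ⟨AddT_addTr 0 0, by simp, by simp, by simp⟩, fun _ => h3,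
      fun hm => absurd hm (not_MultT_addTr a b), fun _ => ?_, fun _ => ?_, ?_,
      fun hg => absurd hg.1 (not_MultT_addTr a b)⟩
    · exact ⟨AddT_addTr _ _, ⟨a, by simp, by simp⟩, ⟨b, by simp, by simp⟩,
        ⟨a + b, by simp, by simp; omega⟩⟩
    · exact ⟨AddT_addTr _ _, ⟨a, by simp, by simp⟩, ⟨b, by simp, by simp⟩,
        ⟨a + b, by simp, by simp; omega⟩⟩
    · exact ⟨MultT_mulTr 0 b, by simp, by simp, ⟨b, by simp, by simp⟩⟩
  · obtain ⟨s4, hs4, s5, hs5, h45⟩ := w4 a b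
    obtain ⟨s9, hs9, h9⟩ := w8 a b t2 ht2
    refine ⟨addTr 0 0, addTr_mem 0 0, s4, hs4, s5, hs5, addTr 0 0, addTr_mem 0 0,
      addTr 0 0, addTr_mem 0 0, mulTr 0 b, mulTr_mem 0 b, s9, hs9, ?_⟩
    exact ⟨GoodT_mulTr a b, ⟨AddT_addTr 0 0, by simp, by simp, by simp⟩,
      fun ha => absurd ha (not_AddT_mulTr a b), fun _ => h45,
      fun ha => absurd ha (not_AddT_mulTr a b), fun ha => absurd ha (not_AddT_mulTr a b),
      ⟨MultT_mulTr 0 b, by simp, by simp, ⟨b, by simp, by simp⟩⟩, h9⟩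

end Hyp

/-- **Addition and multiplication are implementable in HyperLTL**: there is a
HyperLTL sentence whose unique model is `T_op`. -/
theorem hyperltl_arithmetic_unique_model :
    ∃ φ : HFormula AP5, φ.IsSentence ∧
      ∀ T : Set (Trace AP5), HModels T φ ↔ T = TOp := by
  refine ⟨Hyp.phiOp, Hyp.phiOp_sentence, fun T => ?_⟩
  rw [Hyp.models_iff]
  constructor
  · exact Hyp.main_fwd T
  · rintro rfl
    exact Hyp.main_bwd
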